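/- arXiv:2205.13423 — 6 statements merged into one kernel-verified Lean document; each statement's English description precedes it below -/
import Mathlib

section
/- Let σ, t, T, T_post be real numbers with σ > 0, 0 < t, t ≤ T/4, and T < T_post. Then the difference M₁(σ,t,T,T_post) − M₂(σ,T,T_post) is a positive semidefinite 2×2 real matrix. (This is the matrix inequality underlying the paper's main theorem for the Almgren–Chriss model: sampling the three price points P_t, P_T, P_{T_post} with t ≤ T/4 yields Fisher information dominating that of the realized-impact/permanent-impact statistics (I, J), for every impact function and every metaorder distribution.) -/
/-!
Write `s = T_post - T`, so that `4 s + T = 4 T_post - 3 T`. Both matrices carry the factor `σ⁻²`,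
and after clearing the denominator `T (4 s + T)` the difference is the symmetric matrix with
diagonal entries `s` and `T (4 s + T) (1/t + 1/s) - 12 T_post` and off-diagonal entry `T - 2 s`.
A symmetric `2 × 2` matrix with positive upper-left entry is positive semidefinite as soon as its
determinant is nonnegative, and here the determinant is `s (4 s + T) (T - 4 t) / t`, which is
nonnegative exactly when `t ≤ T / 4`.
-/

open Matrix

/-- Fisher information matrix of the three-point experiment `(P_t, P_T, P_{T_post})`
in the Almgren–Chriss model. -/
noncomputable def fisherThreePoint (σ t T Tpost : ℝ) : Matrix (Fin 2) (Fin 2) ℝ :=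
  (σ ^ 2)⁻¹ • !![1 / T, 1 / T; 1 / T, 1 / t + 1 / (Tpost - T)]

/-- Fisher information matrix of the `(I, J)` (realized/permanent impact) experiment
in the Almgren–Chriss model. -/
noncomputable def fisherIJ (σ T Tpost : ℝ) : Matrix (Fin 2) (Fin 2) ℝ :=
  (σ ^ 2)⁻¹ • (1 / T) •
    !![(Tpost / 4 - T / 6) / (Tpost / 3 - T / 4), (Tpost / 2 - T / 2) / (Tpost / 3 - T / 4);
       (Tpost / 2 - T / 2) / (Tpost / 3 - T / 4), Tpost / (Tpost / 3 - T / 4)]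

theorem Matrix.posSemidef_fin_two_of {K : Type*} [Field K] [LinearOrder K]
    [IsStrictOrderedRing K] [StarRing K] [TrivialStar K] {a b c : K}
    (ha : 0 < a) (hdet : b ^ 2 ≤ a * c) : !![a, b; b, c].PosSemidef := by
  refine .of_dotProduct_mulVec_nonneg ?_ fun x ↦ ?_
  · ext i j
    fin_cases i <;> fin_cases j <;> simp
  · simp only [star_trivial, dotProduct, mulVec, Fin.sum_univ_two, cons_val_zero, cons_val_one,
      of_apply, cons_val', empty_val', cons_val_fin_one]
    have hsquare : a * (x 0 * (a * x 0 + b * x 1) + x 1 * (b * x 0 + c * x 1))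
        = (a * x 0 + b * x 1) ^ 2 + (a * c - b ^ 2) * x 1 ^ 2 := by ring
    have hscaled : 0 ≤ a * (x 0 * (a * x 0 + b * x 1) + x 1 * (b * x 0 + c * x 1)) := by
      have := sub_nonneg.2 hdet
      rw [hsquare]
      positivity
    exact (mul_nonneg_iff_of_pos_left ha).1 hscaled

theorem fisherThreePoint_sub_fisherIJ (σ t T Tpost : ℝ) (hT : T ≠ 0)
    (hTpost : 4 * Tpost - 3 * T ≠ 0) :
    fisherThreePoint σ t T Tpost - fisherIJ σ T Tpost =
      (σ ^ 2)⁻¹ • (T * (4 * Tpost - 3 * T))⁻¹ •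
        !![Tpost - T, 3 * T - 2 * Tpost;
           3 * T - 2 * Tpost, T * (4 * Tpost - 3 * T) * (1 / t + 1 / (Tpost - T)) - 12 * Tpost] := by
  have hD : Tpost / 3 - T / 4 = (4 * Tpost - 3 * T) / 12 := by ring
  -- the form in which `field_simp` meets this denominator
  have hTpost' : Tpost * 4 - T * 3 ≠ 0 := by rwa [mul_comm Tpost, mul_comm T]
  rw [fisherThreePoint, fisherIJ, ← smul_sub]
  congr 1
  ext i j
  fin_cases i <;> fin_cases j <;>
    simp only [one_div, hD, smul_of, smul_cons, smul_eq_mul, smul_empty, Fin.zero_eta,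
      Fin.mk_one, Fin.isValue, Matrix.sub_apply, of_apply, cons_val', cons_val_zero, cons_val_one,
      cons_val_fin_one, _root_.mul_inv_rev, Matrix.smul_apply] <;>
    field_simp <;> ring

theorem threePoint_dominates_IJ_general (σ t T Tpost : ℝ) (ht : 0 < t)
    (htT : t ≤ T / 4) (hTpost : T < Tpost) :
    (fisherThreePoint σ t T Tpost - fisherIJ σ T Tpost).PosSemidef := by
  have hT : 0 < T := by linarith
  have hD : 0 < 4 * Tpost - 3 * T := by linarith
  have hs : 0 < Tpost - T := by linarith
  rw [fisherThreePoint_sub_fisherIJ σ t T Tpost hT.ne' hD.ne']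
  refine .smul (.smul (posSemidef_fin_two_of hs ?_) (by positivity)) (by positivity)
  have hdet : (Tpost - T) * (T * (4 * Tpost - 3 * T) * (1 / t + 1 / (Tpost - T)) - 12 * Tpost)
      - (3 * T - 2 * Tpost) ^ 2 = (Tpost - T) * (4 * Tpost - 3 * T) * (T - 4 * t) / t := by
    field_simp
    ring
  have h4t : 0 ≤ T - 4 * t := by linarith
  have : 0 ≤ (Tpost - T) * (4 * Tpost - 3 * T) * (T - 4 * t) / t := by positivity
  linarith

/-- If the extra sample time `t` satisfies `t ≤ T/4`, the three-point Fisher information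
dominates the `(I, J)` Fisher information: their difference is positive semidefinite. -/
theorem threePoint_dominates_IJ (σ t T Tpost : ℝ) (hσ : 0 < σ) (ht : 0 < t)
    (htT : t ≤ T / 4) (hTpost : T < Tpost) :
    (fisherThreePoint σ t T Tpost - fisherIJ σ T Tpost).PosSemidef :=
  threePoint_dominates_IJ_general σ t T Tpost ht htT hTpost
end

section
/- Let σ, t, T, T_post be real numbers with σ > 0, T/4 < t < T < T_post. Then the difference M₁(σ,t,T,T_post) − M₂(σ,T,T_post) is NOT positive semidefinite. (Tightness of the ratio 1/4 in the paper's main theorem: for samples taken later than a quarter of the trade duration, the three-point Fisher information no longer dominates that of (I, J) for all impact functions.) -/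
open Matrix

theorem det_fisherThreePoint_sub_fisherIJ (σ : ℝ) {t T Tpost : ℝ} (ht : t ≠ 0) (hT : T ≠ 0)
    (hTpost : Tpost - T ≠ 0) (hlin : 4 * Tpost - 3 * T ≠ 0) :
    (fisherThreePoint σ t T Tpost - fisherIJ σ T Tpost).det =
      (Tpost - T) * (T - 4 * t) / (σ ^ 4 * T ^ 2 * t * (4 * Tpost - 3 * T)) := by
  have hlin' : Tpost * 4 - T * 3 ≠ 0 := by contrapose! hlin; linarith
  rw [det_fin_two]
  simp only [fisherThreePoint, fisherIJ, Matrix.sub_apply, Matrix.smul_apply, smul_eq_mul,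
    of_apply, cons_val', cons_val_zero, cons_val_one, empty_val', cons_val_fin_one]
  field_simp
  ring

/-- Tightness of the ratio `1/4`: if `T/4 < t < T < T_post`, the difference of the
three-point Fisher information and the `(I, J)` Fisher information is NOT
positive semidefinite. -/
theorem threePoint_not_dominates_IJ_of_late (σ t T Tpost : ℝ) (hσ : 0 < σ)
    (htlow : T / 4 < t) (htT : t < T) (hTpost : T < Tpost) :
    ¬ (fisherThreePoint σ t T Tpost - fisherIJ σ T Tpost).PosSemidef := by
  intro hpsd
  have ht : 0 < t := by linarith
  have hT : 0 < T := by linarith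
  have hdet := hpsd.det_nonneg
  rw [det_fisherThreePoint_sub_fisherIJ σ ht.ne' hT.ne' (by linarith) (by linarith)] at hdet
  have hnum : (Tpost - T) * (T - 4 * t) < 0 := mul_neg_of_pos_of_neg (by linarith) (by linarith)
  have hden : 0 < σ ^ 4 * T ^ 2 * t * (4 * Tpost - 3 * T) := by
    have : 0 < 4 * Tpost - 3 * T := by linarith
    positivity
  exact (div_neg_of_neg_of_pos hnum hden).not_ge hdet
end

section
/- Let τ₁ > 1 be a real number and τ₂ a real number. Then the determinant of the matrix B(τ₁, τ₂), namely det B = (1 − (τ₁/4 − 1/6)/(τ₁/3 − 1/4))·(τ₂ + 1/(τ₁−1) − τ₁/(τ₁/3 − 1/4)) − (1 − (τ₁/2 − 1/2)/(τ₁/3 − 1/4))², is nonnegative if and only if τ₂ ≥ 4. -/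
/-!
Since `τ₁/3 − 1/4 = (4τ₁ − 3)/12`, clearing denominators collapses the determinant to
`(τ₁ − 1)(τ₂ − 4)/(4τ₁ − 3)`, whose factor `(τ₁ − 1)/(4τ₁ − 3)` is positive for `τ₁ > 1`.
-/

lemma detB_eq {τ₁ : ℝ} (τ₂ : ℝ) (h₁ : τ₁ ≠ 1) (h₃ : 4 * τ₁ ≠ 3) :
    (1 - (τ₁ / 4 - 1 / 6) / (τ₁ / 3 - 1 / 4)) *
          (τ₂ + 1 / (τ₁ - 1) - τ₁ / (τ₁ / 3 - 1 / 4)) -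
        (1 - (τ₁ / 2 - 1 / 2) / (τ₁ / 3 - 1 / 4)) ^ 2 =
      (τ₂ - 4) * ((τ₁ - 1) / (4 * τ₁ - 3)) := by
  have h₁' : τ₁ - 1 ≠ 0 := sub_ne_zero.mpr h₁
  have h₃' : τ₁ * 4 - 3 ≠ 0 := by rwa [mul_comm, sub_ne_zero]
  field_simp
  ring

/-- For `τ₁ > 1`, the determinant of the matrix `B(τ₁, τ₂)`,
`det B = (1 − (τ₁/4 − 1/6)/(τ₁/3 − 1/4))·(τ₂ + 1/(τ₁−1) − τ₁/(τ₁/3 − 1/4))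
        − (1 − (τ₁/2 − 1/2)/(τ₁/3 − 1/4))²`,
is nonnegative if and only if `τ₂ ≥ 4`. -/
theorem detB_nonneg_iff (τ₁ τ₂ : ℝ) (hτ₁ : 1 < τ₁) :
    0 ≤ (1 - (τ₁ / 4 - 1 / 6) / (τ₁ / 3 - 1 / 4)) *
          (τ₂ + 1 / (τ₁ - 1) - τ₁ / (τ₁ / 3 - 1 / 4)) -
        (1 - (τ₁ / 2 - 1 / 2) / (τ₁ / 3 - 1 / 4)) ^ 2 ↔ 4 ≤ τ₂ := by
  have hpos : 0 < (τ₁ - 1) / (4 * τ₁ - 3) := div_pos (by linarith) (by linarith)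
  rw [detB_eq τ₂ hτ₁.ne' (by linarith), mul_nonneg_iff_of_pos_right hpos, sub_nonneg]
end

section
/- Let 0 < t < T be real numbers and consider the square-root decay kernel G(s) = s^{−1/2}. Then (∫₀ᵗ s^{−1/2} ds)²/t + (∫_t^T s^{−1/2} ds)²/(T − t) ≥ (3/T³)·(∫₀ᵀ s^{−1/2}(T − s) ds)² if and only if t ≤ T/4. Equivalently: 4 + 4(√T − √t)/(√T + √t) ≥ 16/3 if and only if t ≤ T/4. (This is the γ = 1/2 case of the paper's comparison between the Fisher information of the two sampled prices (S_t, S_T) and that of the VWAP cost J for calibrating the instantaneous impact function in a propagator model; it shows the two-point scheme dominates VWAP exactly when the early sample lies in the first quarter of the trade duration.) -/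
open MeasureTheory intervalIntegral

/-!
For `G(s) = s^{-1/2}` the three integrals are explicit: `2√t`, `2(√T - √t)` and
`T^{3/2} / ((1/2)(3/2)) = (4/3) T √T`. Using `T - t = (√T - √t)(√T + √t)`, the two-point
information becomes `4 + 4(√T - √t)/(√T + √t)` and the VWAP information the constant `16/3`,
so both comparisons reduce to `(√T - √t)/(√T + √t) ≥ 1/3`, i.e. `2√t ≤ √T`.
-/

lemma integral_rpow_neg_half (a b : ℝ) :
    ∫ s in a..b, s ^ (-(1 / 2) : ℝ) = 2 * (√b - √a) := by
  rw [integral_rpow (Or.inl (by norm_num)), Real.sqrt_eq_rpow, Real.sqrt_eq_rpow]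
  norm_num
  ring

lemma integral_rpow_mul_sub {r T : ℝ} (hr : -1 < r) (hT : 0 ≤ T) :
    ∫ s in (0:ℝ)..T, s ^ r * (T - s) = T ^ (r + 2) / ((r + 1) * (r + 2)) := by
  have hsplit : ∀ s ∈ Set.uIcc 0 T, s ^ r * (T - s) = T * s ^ r - s ^ (r + 1) := by
    intro s hs
    rw [Set.uIcc_of_le hT] at hs
    rw [Real.rpow_add' hs.1 (by linarith), Real.rpow_one]
    ring
  have hr' : -1 < r + 1 := by linarith
  have hpow : T ^ (r + 2) = T ^ (r + 1) * T := by
    rw [← Real.rpow_add_one' hT (by linarith)]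
    ring_nf
  have hr1 : r + 1 ≠ 0 := by linarith
  have hr2 : r + 2 ≠ 0 := by linarith
  rw [integral_congr hsplit, integral_sub ((intervalIntegrable_rpow' hr).const_mul T)
      (intervalIntegrable_rpow' hr'), intervalIntegral.integral_const_mul,
    integral_rpow (Or.inl hr), integral_rpow (Or.inl hr'), Real.zero_rpow (by linarith),
    Real.zero_rpow (by linarith), show r + 1 + 1 = r + 2 by ring, hpow]
  field_simp
  ring

lemma four_add_four_mul_div_ge_iff {t T : ℝ} (hT : 0 < T) :
    4 + 4 * (√T - √t) / (√T + √t) ≥ 16 / 3 ↔ t ≤ T / 4 := by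
  have hsum : 0 < √T + √t := by positivity
  have hsqrt : 2 * √t = √(4 * t) := by
    rw [Real.sqrt_mul (by norm_num), show (4 : ℝ) = 2 ^ 2 by norm_num, Real.sqrt_sq (by norm_num)]
  calc 4 + 4 * (√T - √t) / (√T + √t) ≥ 16 / 3 ↔ 2 * √t ≤ √T := by
        rw [ge_iff_le, ← sub_le_iff_le_add', le_div_iff₀ hsum]
        constructor <;> intro h <;> linarith
    _ ↔ t ≤ T / 4 := by
        rw [hsqrt, Real.sqrt_le_sqrt_iff hT.le]
        constructor <;> intro h <;> linarith

lemma twoPoint_sqrt_kernel_eq {t T : ℝ} (ht : 0 < t) (htT : t < T) :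
    (2 * √t) ^ 2 / t + (2 * (√T - √t)) ^ 2 / (T - t) = 4 + 4 * (√T - √t) / (√T + √t) := by
  have hdiff : 0 < √T - √t := sub_pos.2 (Real.sqrt_lt_sqrt ht.le htT)
  have hsum : 0 < √T + √t := by positivity
  have hTt : T - t = (√T - √t) * (√T + √t) := by
    rw [mul_comm, ← sq_sub_sq, Real.sq_sqrt (ht.trans htT).le, Real.sq_sqrt ht.le]
  rw [hTt, mul_pow, Real.sq_sqrt ht.le]
  field_simp
  ring

lemma vwap_sqrt_kernel_eq {T : ℝ} (hT : 0 < T) :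
    3 / T ^ 3 * (T ^ (-(1 / 2) + 2 : ℝ) / ((-(1 / 2) + 1) * (-(1 / 2) + 2))) ^ 2 = 16 / 3 := by
  rw [div_pow, ← Real.rpow_mul_natCast hT.le]
  norm_num
  field_simp
  ring

/-- For the square-root decay kernel `G(s) = s^{−1/2}` and `0 < t < T`, the two-point
Fisher information dominates the VWAP one exactly when `t ≤ T/4`; equivalently,
`4 + 4(√T − √t)/(√T + √t) ≥ 16/3` iff `t ≤ T/4`. -/
theorem sqrt_kernel_twoPoint_vs_vwap (t T : ℝ) (ht : 0 < t) (htT : t < T) :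
    ((∫ s in (0:ℝ)..t, s ^ (-(1 / 2) : ℝ)) ^ 2 / t
        + (∫ s in t..T, s ^ (-(1 / 2) : ℝ)) ^ 2 / (T - t)
      ≥ (3 / T ^ 3) * (∫ s in (0:ℝ)..T, s ^ (-(1 / 2) : ℝ) * (T - s)) ^ 2
      ↔ t ≤ T / 4) ∧
    (4 + 4 * (Real.sqrt T - Real.sqrt t) / (Real.sqrt T + Real.sqrt t) ≥ 16 / 3
      ↔ t ≤ T / 4) := by
  have hT : 0 < T := ht.trans htT
  rw [integral_rpow_neg_half, integral_rpow_neg_half, integral_rpow_mul_sub (by norm_num) hT.le,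
    Real.sqrt_zero, sub_zero, twoPoint_sqrt_kernel_eq ht htT, vwap_sqrt_kernel_eq hT]
  exact ⟨four_add_four_mul_div_ge_iff hT, four_add_four_mul_div_ge_iff hT⟩
end

section
/- Fix real numbers ρ > 0 and 0 < τ < 1, and for T > 0 define F(T) = ((1 − e^{−ρτT})/ρ)²/τ + ((e^{−ρτT} − e^{−ρT})/ρ)²/(1 − τ) − (3/T²)·((ρT + e^{−ρT} − 1)/ρ²)². Then F(T) converges to 1/(τρ²) − 3/ρ² as T → ∞. In particular, the limit is nonnegative if and only if τ ≤ 1/3. (This is the paper's computation for the exponential decay kernel G(s) = e^{−ρs}: in the regime t, T → ∞ with t/T → τ, two-point sampling (S_t, S_T) has at least as much Fisher information as the VWAP cost exactly when τ ≤ 1/3, regardless of ρ.) -/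
/-!
As `T → ∞` both exponentials `e^{−ρτT}` and `e^{−ρT}` vanish, so the two-point term tends to
`(1/ρ)²/τ`, while `(ρT + e^{−ρT} − 1)/T → ρ` makes the VWAP term tend to `3ρ²/ρ⁴ = 3/ρ²`.
-/

open Filter Real Topology

lemma tendsto_exp_neg_mul_atTop {c : ℝ} (hc : 0 < c) :
    Tendsto (fun T : ℝ => exp (-(c * T))) atTop (𝓝 0) :=
  tendsto_exp_neg_atTop_nhds_zero.comp (tendsto_id.const_mul_atTop hc)

lemma tendsto_mul_add_div_self_atTop {a L : ℝ} {f : ℝ → ℝ} (hf : Tendsto f atTop (𝓝 L)) :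
    Tendsto (fun T => (a * T + f T) / T) atTop (𝓝 a) := by
  have hlim : Tendsto (fun T => a + f T * T⁻¹) atTop (𝓝 (a + L * 0)) :=
    tendsto_const_nhds.add (hf.mul tendsto_inv_atTop_zero)
  rw [mul_zero, add_zero] at hlim
  refine hlim.congr' ?_
  filter_upwards [eventually_ne_atTop 0] with T hT
  field_simp

lemma tendsto_two_point_fisher_exp {ρ τ : ℝ} (hρ : 0 < ρ) (hτ : 0 < τ) :
    Tendsto
      (fun T : ℝ =>
        ((1 - exp (-(ρ * τ * T))) / ρ) ^ 2 / τ
          + ((exp (-(ρ * τ * T)) - exp (-(ρ * T))) / ρ) ^ 2 / (1 - τ))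
      atTop (𝓝 (1 / (τ * ρ ^ 2))) := by
  have hτT := tendsto_exp_neg_mul_atTop (mul_pos hρ hτ)
  have hT := tendsto_exp_neg_mul_atTop hρ
  have hlim := ((((tendsto_const_nhds (x := (1 : ℝ))).sub hτT).div_const ρ).pow 2).div_const τ
    |>.add ((((hτT.sub hT).div_const ρ).pow 2).div_const (1 - τ))
  convert hlim using 2
  field_simp
  ring

lemma tendsto_vwap_fisher_exp {ρ : ℝ} (hρ : 0 < ρ) :
    Tendsto (fun T : ℝ => (3 / T ^ 2) * ((ρ * T + exp (-(ρ * T)) - 1) / ρ ^ 2) ^ 2)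
      atTop (𝓝 (3 / ρ ^ 2)) := by
  have hslope : Tendsto (fun T => (ρ * T + (exp (-(ρ * T)) - 1)) / T) atTop (𝓝 ρ) :=
    tendsto_mul_add_div_self_atTop ((tendsto_exp_neg_mul_atTop hρ).sub_const 1)
  have hlim := (hslope.pow 2).const_mul (3 / ρ ^ 4)
  convert hlim.congr' ?_ using 2
  · field_simp
  · filter_upwards [eventually_ne_atTop 0] with T hT
    field_simp
    ring

lemma one_div_mul_sub_three_div_nonneg_iff {τ c : ℝ} (hτ : 0 < τ) (hc : 0 < c) :
    0 ≤ 1 / (τ * c) - 3 / c ↔ τ ≤ 1 / 3 := by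
  rw [sub_nonneg, div_le_div_iff₀ hc (mul_pos hτ hc)]
  constructor <;> intro h <;> nlinarith

theorem exp_kernel_limit_general (ρ τ : ℝ) (hρ : 0 < ρ) (hτ0 : 0 < τ) :
    Filter.Tendsto
      (fun T : ℝ =>
        ((1 - Real.exp (-(ρ * τ * T))) / ρ) ^ 2 / τ
          + ((Real.exp (-(ρ * τ * T)) - Real.exp (-(ρ * T))) / ρ) ^ 2 / (1 - τ)
          - (3 / T ^ 2) * ((ρ * T + Real.exp (-(ρ * T)) - 1) / ρ ^ 2) ^ 2)
      Filter.atTop (nhds (1 / (τ * ρ ^ 2) - 3 / ρ ^ 2)) ∧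
    (0 ≤ 1 / (τ * ρ ^ 2) - 3 / ρ ^ 2 ↔ τ ≤ 1 / 3) :=
  ⟨(tendsto_two_point_fisher_exp hρ hτ0).sub (tendsto_vwap_fisher_exp hρ),
    one_div_mul_sub_three_div_nonneg_iff hτ0 (pow_pos hρ 2)⟩

/-- For the exponential decay kernel `G(s) = e^{−ρs}` with `ρ > 0` and `0 < τ < 1`, the
difference `F(T)` of the two-point and VWAP-based Fisher information terms converges,
as `T → ∞`, to `1/(τρ²) − 3/ρ²`, which is nonnegative iff `τ ≤ 1/3`. -/
theorem exp_kernel_limit (ρ τ : ℝ) (hρ : 0 < ρ) (hτ0 : 0 < τ) (hτ1 : τ < 1) :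
    Filter.Tendsto
      (fun T : ℝ =>
        ((1 - Real.exp (-(ρ * τ * T))) / ρ) ^ 2 / τ
          + ((Real.exp (-(ρ * τ * T)) - Real.exp (-(ρ * T))) / ρ) ^ 2 / (1 - τ)
          - (3 / T ^ 2) * ((ρ * T + Real.exp (-(ρ * T)) - 1) / ρ ^ 2) ^ 2)
      Filter.atTop (nhds (1 / (τ * ρ ^ 2) - 3 / ρ ^ 2)) ∧
    (0 ≤ 1 / (τ * ρ ^ 2) - 3 / ρ ^ 2 ↔ τ ≤ 1 / 3) :=
  exp_kernel_limit_general ρ τ hρ hτ0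
end

section
/- Let N ≥ 1 and let 0 = t₀ < t₁ < ... < t_N be real numbers. Suppose w₀, w₁, ..., w_N are real numbers such that ∑_{i=1}^{N} w_i·(t_i^{1−γ} − t_{i−1}^{1−γ}) = w₀·(1 − γ) for every real γ < 1. Then w_i = 0 for every i ∈ {0, 1, ..., N}. (This linear-independence statement is the key step in the paper's proof that the increments η_i(γ) = ∫_{t_{i−1}}^{t_i} s^{−γ} ds cannot all lie in a proper affine hyperplane, which establishes that the full price trajectory is the unique minimal sufficient statistic for propagator models with power-law decay kernels.) -/
/-!
Substituting `γ = -k` turns the hypothesis into `∑ wᵢ (tᵢ^(k+1) - tᵢ₋₁^(k+1)) = w₀ (k + 1)` for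
every `k : ℕ`; summation by parts rewrites the left side as `∑ aᵢ tᵢ^(k+1)` with
`aᵢ = wᵢ - wᵢ₊₁` (and `w_{N+1} = 0`). The second difference in `k` kills the linear right side, so
by Vandermonde `aᵢ tᵢ (tᵢ - 1)² = 0`: every `tᵢ` carrying weight equals `1`, the left side is
independent of `k`, and hence `w₀ = 0`. A second application of Vandermonde gives `aᵢ = 0`, so the
`wᵢ` are constant in `i` and vanish at `N + 1`.
-/

open Finset

theorem Finset.sum_range_mul_sub_eq {R : Type*} [CommRing R] (w y : ℕ → R) (N : ℕ) :
    ∑ i ∈ range N, w (i + 1) * (y (i + 1) - y i) =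
      ∑ i ∈ range N, (w (i + 1) - w (i + 2)) * y (i + 1) + w (N + 1) * y N - w 1 * y 0 := by
  induction N with
  | zero => simp
  | succ N ih => rw [sum_range_succ, sum_range_succ, ih]; ring

theorem Finset.sum_range_mul_sub_eq_of_eq_zero {R : Type*} [CommRing R] {w v y : ℕ → R} {N : ℕ}
    (hv : ∀ i < N, v (i + 1) = w (i + 1)) (hvN : v (N + 1) = 0) (hy0 : y 0 = 0) :
    ∑ i ∈ range N, w (i + 1) * (y (i + 1) - y i) =
      ∑ i ∈ range N, (v (i + 1) - v (i + 2)) * y (i + 1) := by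
  rw [sum_congr rfl fun i hi => by rw [← hv i (mem_range.1 hi)], sum_range_mul_sub_eq, hvN, hy0]
  ring

theorem eq_of_forall_eq_succ {α : Type*} {f : ℕ → α} {m n : ℕ} (hmn : m ≤ n)
    (h : ∀ i, m ≤ i → i < n → f i = f (i + 1)) : f m = f n := by
  induction n, hmn using Nat.le_induction with
  | base => rfl
  | succ n hmn ih => exact (ih fun i hi hin => h i hi (by omega)).trans (h n hmn (by omega))

theorem eq_zero_of_sum_mul_pow_succ_eq_mul_succ {R : Type*} [CommRing R] [IsDomain R] {n : ℕ}
    {x c : Fin n → R} {α : R} (hx : Function.Injective x) (hx0 : ∀ i, x i ≠ 0)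
    (h : ∀ k : ℕ, ∑ i, c i * x i ^ (k + 1) = α * (k + 1)) : α = 0 ∧ c = 0 := by
  have hsq : (fun i => c i * x i * (x i - 1) ^ 2) = 0 := by
    refine Matrix.eq_zero_of_forall_pow_sum_mul_pow_eq_zero hx fun k => ?_
    calc ∑ i, c i * x i * (x i - 1) ^ 2 * x i ^ (k : ℕ)
        = ∑ i, c i * x i ^ ((k + 2 : ℕ) + 1) - 2 * ∑ i, c i * x i ^ ((k + 1 : ℕ) + 1)
            + ∑ i, c i * x i ^ ((k : ℕ) + 1) := by
          rw [mul_sum, ← sum_sub_distrib, ← sum_add_distrib]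
          exact sum_congr rfl fun i _ => by ring
      _ = 0 := by rw [h, h, h]; push_cast; ring
  have hfix : ∀ i k, c i * x i ^ (k + 1) = c i := by
    intro i k
    rcases mul_eq_zero.mp (congrFun hsq i) with hcx | hx1
    · rcases mul_eq_zero.mp hcx with hc | hx'
      · simp [hc]
      · exact absurd hx' (hx0 i)
    · rw [sub_eq_zero.mp (pow_eq_zero_iff two_ne_zero |>.mp hx1), one_pow, mul_one]
  have hα : α = 0 := by
    have h0 := h 0
    have h1 := h 1
    simp only [hfix] at h0 h1
    push_cast at h0 h1
    linear_combination h0 - h1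
  refine ⟨hα, funext fun i => ?_⟩
  have hcx : (fun i => c i * x i) = 0 :=
    Matrix.eq_zero_of_forall_pow_sum_mul_pow_eq_zero hx fun k => by
      simpa only [mul_assoc, ← pow_succ', hα, zero_mul] using h k
  exact (mul_eq_zero.mp (congrFun hcx i)).resolve_right (hx0 i)

theorem power_increments_linearIndependent_general (N : ℕ) (t : ℕ → ℝ)
    (ht0 : t 0 = 0) (hmono : ∀ i, i < N → t i < t (i + 1)) (w : ℕ → ℝ)
    (h : ∀ γ : ℝ, γ < 1 →
      ∑ i ∈ Finset.range N, w (i + 1) * (t (i + 1) ^ (1 - γ) - t i ^ (1 - γ))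
        = w 0 * (1 - γ)) :
    ∀ i, i ≤ N → w i = 0 := by
  have ht : StrictMonoOn t (Set.Iic N) := strictMonoOn_Iic_of_lt_succ hmono
  set x : Fin N → ℝ := fun i => t (i + 1)
  have hx : Function.Injective x := fun i j hij =>
    Fin.ext (by simpa using ht.injOn (Set.mem_Iic.2 i.2) (Set.mem_Iic.2 j.2) hij)
  have hx0 (i : Fin N) : x i ≠ 0 :=
    (ht0 ▸ ht (Set.mem_Iic.2 (Nat.zero_le N)) (Set.mem_Iic.2 i.2) (Nat.succ_pos i)).ne'
  set v : ℕ → ℝ := fun j => if j ≤ N then w j else 0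
  have hpow (k : ℕ) : ∑ i : Fin N, (v (i + 1) - v (i + 2)) * x i ^ (k + 1) = w 0 * (k + 1) := by
    have hk := h (-k) (by linarith [(k.cast_nonneg : (0 : ℝ) ≤ k)])
    rw [sub_neg_eq_add, add_comm (1 : ℝ)] at hk
    norm_cast at hk
    rw [Fin.sum_univ_eq_sum_range (fun i => (v (i + 1) - v (i + 2)) * t (i + 1) ^ (k + 1)) N,
      ← Nat.cast_add_one, ← hk]
    exact (sum_range_mul_sub_eq_of_eq_zero (y := fun i => t i ^ (k + 1)) (fun i hi => if_pos hi)
      (if_neg (Nat.lt_irrefl _)) (by simp [ht0])).symm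
  obtain ⟨hw0, hdiff⟩ := eq_zero_of_sum_mul_pow_succ_eq_mul_succ hx hx0 hpow
  rintro (_ | j) hj
  · exact hw0
  have hvj : v (j + 1) = v (N + 1) :=
    eq_of_forall_eq_succ (f := fun i => v (i + 1)) (by omega) fun i _ hiN => by
      simpa [sub_eq_zero] using congrFun hdiff ⟨i, hiN⟩
  simpa [v, hj] using hvj

/-- Linear independence of power increments: if `0 = t₀ < t₁ < ... < t_N` and
`∑_{i=1}^{N} wᵢ·(tᵢ^{1−γ} − t_{i−1}^{1−γ}) = w₀·(1 − γ)` for every real `γ < 1`,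
then all the `wᵢ` vanish. -/
theorem power_increments_linearIndependent (N : ℕ) (hN : 1 ≤ N) (t : ℕ → ℝ)
    (ht0 : t 0 = 0) (hmono : ∀ i, i < N → t i < t (i + 1)) (w : ℕ → ℝ)
    (h : ∀ γ : ℝ, γ < 1 →
      ∑ i ∈ Finset.range N, w (i + 1) * (t (i + 1) ^ (1 - γ) - t i ^ (1 - γ))
        = w 0 * (1 - γ)) :
    ∀ i, i ≤ N → w i = 0 :=
  power_increments_linearIndependent_general N t ht0 hmono w h
end
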